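/- Let M be a compact metric space and φ: M → M continuous, and let Q be a φ-ergodic Borel probability measure. Let G = {G_n} be an asymptotically additive sequence of bounded Borel functions on M. Then for Q-almost every x ∈ M, lim_{n→∞} (1/n) G_n(x) = G(Q), where G(Q) = lim_{n→∞} (1/n) ∫ G_n dQ. -/

import Mathlib

open MeasureTheory Filter Topology Set
open scoped ENNReal

variable {M : Type*} [MetricSpace M] [CompactSpace M] [MeasurableSpace M] [BorelSpace M]

/-- Birkhoff sum `S_n V = ∑_{j<n} V ∘ φ^j`. -/
noncomputable def birkhoff (φ : M → M) (V : M → ℝ) (n : ℕ) (x : M) : ℝ :=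
  ∑ j ∈ Finset.range n, V (φ^[j] x)

/-- Supremum norm `‖f‖_∞` valued in `ℝ≥0∞`. -/
noncomputable def supNorm (f : M → ℝ) : ℝ≥0∞ :=
  ⨆ x : M, ENNReal.ofReal |f x|

/-- `Gk` is an approximating sequence for `G`:
`lim_{k→∞} limsup_{n→∞} (1/n) ‖G_n − S_n G^{(k)}‖_∞ = 0`. -/
def ApproxSeq (φ : M → M) (G : ℕ → M → ℝ) (Gk : ℕ → M → ℝ) : Prop :=
  Tendsto
    (fun k => Filter.limsup
      (fun n => supNorm (fun x => G n x - birkhoff φ (Gk k) n x) / (n : ℝ≥0∞)) atTop)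
    atTop (nhds 0)

/-- `G = {G_n}` is an asymptotically additive sequence of bounded Borel functions. -/
def AsympAdd (φ : M → M) (G : ℕ → M → ℝ) : Prop :=
  (∀ n, Measurable (G n) ∧ ∃ C : ℝ, ∀ x, |G n x| ≤ C) ∧
  ∃ Gk : ℕ → M → ℝ, (∀ k, Continuous (Gk k)) ∧ ApproxSeq φ G Gk

/-- Bowen ball `B_n(x, ε)`. -/
def bowenBall (φ : M → M) (n : ℕ) (x : M) (ε : ℝ) : Set M :=
  {y | ∀ k < n, dist (φ^[k] y) (φ^[k] x) < ε}

/-- `E` is `(ε,n)`-spanning. -/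
def IsSpanning (φ : M → M) (n : ℕ) (ε : ℝ) (E : Finset M) : Prop :=
  ∀ x : M, ∃ y ∈ E, x ∈ bowenBall φ n y ε

/-- `E` is `(ε,n)`-separated. -/
def IsSeparated (φ : M → M) (n : ℕ) (ε : ℝ) (E : Finset M) : Prop :=
  ∀ x ∈ E, ∀ y ∈ E, x ≠ y → x ∉ bowenBall φ n y ε

/-- `S(G,ε,n)`. -/
noncomputable def spanSum (φ : M → M) (G : ℕ → M → ℝ) (ε : ℝ) (n : ℕ) : ℝ≥0∞ :=
  ⨅ (E : Finset M) (_ : IsSpanning φ n ε E), ∑ x ∈ E, ENNReal.ofReal (Real.exp (G n x))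

/-- `N(G,ε,n)`. -/
noncomputable def sepSum (φ : M → M) (G : ℕ → M → ℝ) (ε : ℝ) (n : ℕ) : ℝ≥0∞ :=
  ⨆ (E : Finset M) (_ : IsSeparated φ n ε E), ∑ x ∈ E, ENNReal.ofReal (Real.exp (G n x))

/-- Topological pressure of an asymptotically additive sequence, via `(ε,n)`-separated sets. -/
noncomputable def pressure (φ : M → M) (G : ℕ → M → ℝ) : EReal :=
  ⨆ (ε : ℝ) (_ : 0 < ε),
    Filter.limsup (fun n : ℕ => (((n : ℝ)⁻¹ : ℝ) : EReal) * ENNReal.log (sepSum φ G ε n)) atTop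

/-- Entropy of the partition of `M` induced by a map into a finite type. -/
noncomputable def mapEntropy (μ : Measure M) {α : Type} [Fintype α] (c : M → α) : ℝ :=
  ∑ a : α, Real.negMulLog ((μ (c ⁻¹' {a})).toReal)

/-- Kolmogorov–Sinai entropy of `φ` along a finite partition `P` (encoded as `P : M → Fin m`). -/
noncomputable def partKS (φ : M → M) (μ : Measure M) {m : ℕ} (P : M → Fin m) : ℝ :=
  ⨅ n : ℕ, ((n : ℝ) + 1)⁻¹ *
    mapEntropy μ (fun x => fun i : Fin (n + 1) => P (φ^[(i : ℕ)] x))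

/-- Kolmogorov–Sinai entropy `h_φ(μ)`. -/
noncomputable def ksEntropy (φ : M → M) (μ : Measure M) : ℝ≥0∞ :=
  ⨆ (m : ℕ) (P : M → Fin m) (_ : Measurable P), ENNReal.ofReal (partKS φ μ P)

/-- Set of `n`-periodic points of `φ`. -/
def perSet (φ : M → M) (n : ℕ) : Set M := {x | φ^[n] x = x}

/-- `Z_n(G) = ∑_{x ∈ M_n} e^{G_n(x)}`, as an extended nonnegative real. -/
noncomputable def perPartition (φ : M → M) (G : ℕ → M → ℝ) (n : ℕ) : ℝ≥0∞ :=
  ∑' x : perSet φ n, ENNReal.ofReal (Real.exp (G n x))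

/-- The periodic-orbit measure `P_n = Z_n⁻¹ ∑_{x ∈ M_n} e^{G_n(x)} δ_x`. -/
noncomputable def perGibbs (φ : M → M) (G : ℕ → M → ℝ) (n : ℕ) : Measure M :=
  (perPartition φ G n)⁻¹ •
    Measure.sum (fun x : perSet φ n => ENNReal.ofReal (Real.exp (G n x)) • Measure.dirac (x : M))

/-- Weak periodic specification property. -/
def WPS (φ : M → M) : Prop :=
  ∃ m : ℝ → ℕ → ℕ, ∃ N : ℝ → ℕ,
    (∀ δ : ℝ, 0 < δ → ∀ n, N δ ≤ n → m δ n < n) ∧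
    (∀ δ : ℝ, 0 < δ → ∀ n, N δ ≤ n → ∀ x : M,
      ∃ y ∈ perSet φ n, y ∈ bowenBall φ (n - m δ n) x δ) ∧
    Tendsto (fun δ : ℝ => Filter.limsup (fun n => (m δ n : ℝ≥0∞) / (n : ℝ≥0∞)) atTop)
      (𝓝[>] (0 : ℝ)) (nhds 0)

/-- Specification property (S). -/
def SpecProp (φ : M → M) : Prop :=
  ∀ δ : ℝ, 0 < δ → ∃ N : ℕ, ∀ (r : ℕ) (a b : Fin r → ℕ) (pts : Fin r → M),
    (∀ i, a i ≤ b i) →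
    (∀ i j, i ≠ j → ∀ k, a i ≤ k → k ≤ b i → ∀ l, a j ≤ l → l ≤ b j → N ≤ Nat.dist k l) →
    ∃ x : M, ∀ i, ∀ k, a i ≤ k → k ≤ b i → dist (φ^[k] x) (φ^[k] (pts i)) < δ

/-- Condition (PAP): finitely many periodic points and periodic approximation of pressure. -/
def PAP (φ : M → M) : Prop :=
  (∀ n : ℕ, 0 < n → (perSet φ n).Finite) ∧
  ∀ G : ℕ → M → ℝ, AsympAdd φ G →
    Tendsto (fun n : ℕ => (((n : ℝ)⁻¹ : ℝ) : EReal) * ENNReal.log (perPartition φ G n)) atTop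
      (nhds (pressure φ G))

/-- Condition (USCE): finite topological entropy and upper semicontinuous entropy map. -/
def USCE (φ : M → M) : Prop :=
  pressure φ (fun _ _ => (0 : ℝ)) ≠ ⊤ ∧
  UpperSemicontinuousOn (fun μ : ProbabilityMeasure M => ksEntropy φ (μ : Measure M))
    {μ : ProbabilityMeasure M | (μ : Measure M).map φ = (μ : Measure M)}

/-- Empirical measure `μ_n^x`. -/
noncomputable def empMeas (φ : M → M) (n : ℕ) (x : M) : Measure M :=
  ((n : ℝ≥0∞))⁻¹ • ∑ i ∈ Finset.range n, Measure.dirac (φ^[i] x)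

/-- Weak Gibbs property of `P` for `G`, with (finite, real) pressure `p`. -/
def WeakGibbs (φ : M → M) (G : ℕ → M → ℝ) (p : ℝ) (P : Measure M) : Prop :=
  ∃ K : ℕ → ℝ → ℝ,
    (∀ n : ℕ, ∀ ε : ℝ, 0 < ε → 1 ≤ K n ε) ∧
    (∀ n : ℕ, 0 < n → ∀ ε : ℝ, 0 < ε → ∀ x : M,
      ENNReal.ofReal (Real.exp (G n x - n * p)) / ENNReal.ofReal (K n ε)
          ≤ P (bowenBall φ n x ε) ∧
      P (bowenBall φ n x ε)
          ≤ ENNReal.ofReal (K n ε) * ENNReal.ofReal (Real.exp (G n x - n * p))) ∧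
    Tendsto (fun ε : ℝ => Filter.limsup (fun n => ENNReal.ofReal (Real.log (K n ε) / n)) atTop)
      (𝓝[>] (0 : ℝ)) (nhds 0)

/-!
Asymptotic additivity reduces everything to Birkhoff averages of the continuous functions
`G^(k)`: once `k` is large, `(1/n) G_n` is eventually within `δ` of `(1/n) S_n G^(k)`, uniformly
in `x`. Hence the integrals `∫ G^(k) dQ` form a Cauchy sequence, whose limit `G(Q)` is also the
limit of `(1/n) ∫ G_n dQ`, and the pointwise ergodic theorem for each `G^(k)` transfers to
`(1/n) G_n`.

The pointwise ergodic theorem for a bounded measurable `g` is proved by a stopping-time argument.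
The limsup `c` of the Birkhoff averages is invariant, hence a.e. constant by ergodicity. Almost
every orbit has some average above `c - ε`; off a set of small measure this happens within `N`
steps, and cutting orbits into such stretches gives `S_m g ≥ m (c - ε) - O(N)`. Integrating yields
`c ≤ ∫ g`, and the same bound for `-g` controls the liminf.
-/

theorem Filter.limsup_le_limsup_of_tendsto_sub {ι : Type*} {l : Filter ι} [l.NeBot]
    {u v : ι → ℝ} (hv : IsBoundedUnder (· ≤ ·) l v) (hv' : IsBoundedUnder (· ≥ ·) l v)
    (h : Tendsto (fun i => u i - v i) l (𝓝 0)) : limsup u l ≤ limsup v l := by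
  have := limsup_add_le h.isBoundedUnder_ge h.isBoundedUnder_le hv'.isCoboundedUnder_flip hv
  simpa [Pi.add_def, h.limsup_eq] using this

section BirkhoffAverage

variable {α : Type*} {f : α → α} {g : α → ℝ} {C : ℝ}

theorem abs_birkhoffSum_le (hC : ∀ x, |g x| ≤ C) (n : ℕ) (x : α) :
    |birkhoffSum f g n x| ≤ n * C :=
  calc |birkhoffSum f g n x| ≤ ∑ k ∈ Finset.range n, |g (f^[k] x)| :=
        Finset.abs_sum_le_sum_abs _ _
    _ ≤ ∑ _k ∈ Finset.range n, C := Finset.sum_le_sum fun k _ => hC (f^[k] x)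
    _ = n * C := by simp

theorem abs_birkhoffAverage_le (hC : ∀ x, |g x| ≤ C) (n : ℕ) (x : α) :
    |birkhoffAverage ℝ f g n x| ≤ C := by
  rcases Nat.eq_zero_or_pos n with rfl | hn
  · simpa using (abs_nonneg _).trans (hC x)
  · rw [birkhoffAverage, smul_eq_mul, abs_mul, abs_inv, Nat.abs_cast,
      inv_mul_le_iff₀ (by positivity)]
    exact abs_birkhoffSum_le hC n x

theorem isBoundedUnder_le_birkhoffAverage (hC : ∀ x, |g x| ≤ C) (x : α) :
    IsBoundedUnder (· ≤ ·) atTop (birkhoffAverage ℝ f g · x) :=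
  isBoundedUnder_of ⟨C, fun n => (abs_le.1 (abs_birkhoffAverage_le hC n x)).2⟩

theorem isBoundedUnder_ge_birkhoffAverage (hC : ∀ x, |g x| ≤ C) (x : α) :
    IsBoundedUnder (· ≥ ·) atTop (birkhoffAverage ℝ f g · x) :=
  isBoundedUnder_of ⟨-C, fun n => (abs_le.1 (abs_birkhoffAverage_le hC n x)).1⟩

theorem limsup_birkhoffAverage_apply (hC : ∀ x, |g x| ≤ C) (x : α) :
    limsup (birkhoffAverage ℝ f g · (f x)) atTop = limsup (birkhoffAverage ℝ f g · x) atTop := by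
  have hg : Bornology.IsBounded (range g) :=
    isBounded_iff_forall_norm_le.2 ⟨C, by rintro _ ⟨y, rfl⟩; exact hC y⟩
  have h := tendsto_birkhoffAverage_apply_sub_birkhoffAverage' ℝ hg f x
  exact le_antisymm
    (limsup_le_limsup_of_tendsto_sub (isBoundedUnder_le_birkhoffAverage hC x)
      (isBoundedUnder_ge_birkhoffAverage hC x) h)
    (limsup_le_limsup_of_tendsto_sub (isBoundedUnder_le_birkhoffAverage hC (f x))
      (isBoundedUnder_ge_birkhoffAverage hC (f x)) (by simpa using h.neg))

theorem sub_le_birkhoffSum_of_forall_exists_le {h : α → ℝ} {a b : ℝ} {N : ℕ}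
    (hb : ∀ x, b ≤ h x)
    (hstop : ∀ x, ∃ n ∈ Finset.Icc 1 N, n * a ≤ birkhoffSum f h n x) (m : ℕ) (x : α) :
    m * a - N * |a - b| ≤ birkhoffSum f h m x := by
  induction m using Nat.strong_induction_on generalizing x with
  | _ m ih =>
    obtain ⟨n, hn, hnx⟩ := hstop x
    obtain ⟨hn1, hnN⟩ := Finset.mem_Icc.1 hn
    by_cases hm : m ≤ N
    · have hsum : m * b ≤ birkhoffSum f h m x :=
        calc (m : ℝ) * b = ∑ _k ∈ Finset.range m, b := by simp
          _ ≤ birkhoffSum f h m x := Finset.sum_le_sum fun k _ => hb (f^[k] x)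
      have hmN : (m : ℝ) ≤ N := by exact_mod_cast hm
      nlinarith [le_abs_self (a - b), abs_nonneg (a - b)]
    · obtain ⟨r, rfl⟩ := Nat.exists_eq_add_of_le (hnN.trans (not_le.1 hm).le)
      have hr := ih r (by omega) (f^[n] x)
      rw [birkhoffSum_add]
      push_cast
      linarith

end BirkhoffAverage

section MeasurePreserving

variable {α : Type*} [MeasurableSpace α] {f : α → α} {μ : Measure α}

theorem Measurable.birkhoffSum (hf : Measurable f) {g : α → ℝ} (hg : Measurable g) (n : ℕ) :
    Measurable (birkhoffSum f g n) :=
  Finset.measurable_sum _ fun k _ => hg.comp (hf.iterate k)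

theorem MeasureTheory.MeasurePreserving.integrable_birkhoffSum {E : Type*}
    [NormedAddCommGroup E] (hf : MeasurePreserving f μ μ) {g : α → E} (hg : Integrable g μ)
    (n : ℕ) : Integrable (birkhoffSum f g n) μ := by
  unfold birkhoffSum
  exact integrable_finsetSum _ fun k _ => (hf.iterate k).integrable_comp_of_integrable hg

theorem MeasureTheory.MeasurePreserving.integral_birkhoffSum {E : Type*}
    [NormedAddCommGroup E] [NormedSpace ℝ E] (hf : MeasurePreserving f μ μ) {g : α → E}
    (hg : Integrable g μ) (n : ℕ) : ∫ x, birkhoffSum f g n x ∂μ = n • ∫ x, g x ∂μ := by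
  have hcomp : ∀ k, ∫ x, g (f^[k] x) ∂μ = ∫ x, g x ∂μ := fun k => by
    have hk := (hf.iterate k).map_eq
    rw [← integral_map (hf.iterate k).measurable.aemeasurable
      (by rw [hk]; exact hg.aestronglyMeasurable), hk]
  simp only [birkhoffSum]
  rw [integral_finsetSum (f := fun k x => g (f^[k] x)) _
    fun k _ => (hf.iterate k).integrable_comp_of_integrable hg]
  simp only [hcomp, Finset.sum_const, Finset.card_range]

theorem MeasureTheory.MeasurePreserving.integrable_birkhoffAverage {E : Type*}
    [NormedAddCommGroup E] [NormedSpace ℝ E] (hf : MeasurePreserving f μ μ) {g : α → E}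
    (hg : Integrable g μ) (n : ℕ) : Integrable (birkhoffAverage ℝ f g n) μ :=
  (hf.integrable_birkhoffSum hg n).smul (n : ℝ)⁻¹

theorem MeasureTheory.MeasurePreserving.integral_birkhoffAverage {E : Type*}
    [NormedAddCommGroup E] [NormedSpace ℝ E] (hf : MeasurePreserving f μ μ) {g : α → E}
    (hg : Integrable g μ) {n : ℕ} (hn : n ≠ 0) :
    ∫ x, birkhoffAverage ℝ f g n x ∂μ = ∫ x, g x ∂μ := by
  simp only [birkhoffAverage]
  rw [integral_smul, hf.integral_birkhoffSum hg, ← Nat.cast_smul_eq_nsmul ℝ, smul_smul,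
    inv_mul_cancel₀ (by exact_mod_cast hn), one_smul]

theorem MeasureTheory.MeasurePreserving.le_integral_of_forall_exists_le_birkhoffSum
    [IsProbabilityMeasure μ] (hf : MeasurePreserving f μ μ) {h : α → ℝ} (hh : Integrable h μ)
    {a b : ℝ} {N : ℕ} (hb : ∀ x, b ≤ h x)
    (hstop : ∀ x, ∃ n ∈ Finset.Icc 1 N, n * a ≤ birkhoffSum f h n x) :
    a ≤ ∫ x, h x ∂μ := by
  set B := N * |a - b|
  have hsum (m : ℕ) : m * a - B ≤ m * ∫ x, h x ∂μ := by
    have := integral_mono (integrable_const _) (hf.integrable_birkhoffSum hh m)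
      (sub_le_birkhoffSum_of_forall_exists_le hb hstop m)
    simpa [hf.integral_birkhoffSum hh] using this
  have hlim : Tendsto (fun m : ℕ => ∫ x, h x ∂μ + B / m) atTop (𝓝 (∫ x, h x ∂μ)) := by
    simpa using tendsto_const_nhds.add (tendsto_const_div_atTop_nhds_zero_nat B)
  refine ge_of_tendsto hlim ((eventually_gt_atTop 0).mono fun m hm => ?_)
  have hm' : (0 : ℝ) < m := by exact_mod_cast hm
  have : a - ∫ x, h x ∂μ ≤ B / m := by
    rw [le_div_iff₀ hm']
    linarith [hsum m]
  linarith

theorem MeasureTheory.tendsto_measureReal_compl_of_ae_mem_iUnion [IsFiniteMeasure μ]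
    {s : ℕ → Set α} (hs : ∀ N, MeasurableSet (s N)) (hmono : Monotone s)
    (hae : ∀ᵐ x ∂μ, x ∈ ⋃ N, s N) : Tendsto (fun N => μ.real (s N)ᶜ) atTop (𝓝 0) := by
  have hnull : μ (⋂ N, (s N)ᶜ) = 0 := by
    rw [← compl_iUnion]
    exact ae_iff.1 hae
  have := tendsto_measure_iInter_atTop (fun N => (hs N).compl.nullMeasurableSet)
    (fun _ _ hN => compl_subset_compl.2 (hmono hN)) ⟨0, measure_ne_top μ _⟩
  rw [hnull] at this
  exact (ENNReal.tendsto_toReal ENNReal.zero_ne_top).comp this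

theorem MeasureTheory.MeasurePreserving.le_integral_of_ae_exists_le_birkhoffSum
    [IsProbabilityMeasure μ] (hf : MeasurePreserving f μ μ) {g : α → ℝ} (hg : Measurable g)
    {C : ℝ} (hC : ∀ x, |g x| ≤ C) {a : ℝ}
    (hae : ∀ᵐ x ∂μ, ∃ n, 1 ≤ n ∧ n * a ≤ birkhoffSum f g n x) :
    a ≤ ∫ x, g x ∂μ := by
  set good : ℕ → Set α := fun N => ⋃ n ∈ Finset.Icc 1 N, {x | n * a ≤ birkhoffSum f g n x}
  have hgood (N : ℕ) : MeasurableSet (good N) :=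
    Finset.measurableSet_biUnion _ fun n _ =>
      measurableSet_le measurable_const (hf.measurable.birkhoffSum hg n)
  have hmono : Monotone good := fun N N' hN =>
    biUnion_subset_biUnion_left <| Finset.coe_subset.2 (Finset.Icc_subset_Icc_right hN)
  have hbad := tendsto_measureReal_compl_of_ae_mem_iUnion hgood hmono <|
    hae.mono fun x ⟨n, hn, hnx⟩ =>
      mem_iUnion.2 ⟨n, mem_iUnion₂.2 ⟨n, Finset.mem_Icc.2 ⟨hn, le_rfl⟩, hnx⟩⟩
  have hint_g : Integrable g μ := Integrable.of_bound hg.aestronglyMeasurable C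
    (Eventually.of_forall fun x => hC x)
  set K := |a| + C
  -- raising `g` by `K` off `good N` makes every point stop within `N` steps
  have hbound (N : ℕ) (hN : 1 ≤ N) : a ≤ ∫ x, g x ∂μ + μ.real (good N)ᶜ * K := by
    set h := fun x => g x + (good N)ᶜ.indicator (fun _ => K) x
    have hgh (x : α) : g x ≤ h x :=
      le_add_of_nonneg_right (indicator_nonneg (fun _ _ => by
        linarith [abs_nonneg a, (abs_nonneg _).trans (hC x)]) _)
    have hint_ind : Integrable ((good N)ᶜ.indicator fun _ => K) μ :=
      (integrable_const K).indicator (hgood N).compl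
    have hstop (x : α) : ∃ n ∈ Finset.Icc 1 N, n * a ≤ birkhoffSum f h n x := by
      by_cases hx : x ∈ good N
      · obtain ⟨n, hn, hnx⟩ := mem_iUnion₂.1 hx
        exact ⟨n, hn, hnx.trans (Finset.sum_le_sum fun k _ => hgh _)⟩
      · refine ⟨1, Finset.mem_Icc.2 ⟨le_rfl, hN⟩, ?_⟩
        simp only [Nat.cast_one, one_mul, birkhoffSum_one, h, indicator_of_mem (mem_compl hx)]
        linarith [le_abs_self a, (abs_le.1 (hC x)).1]
    have := hf.le_integral_of_forall_exists_le_birkhoffSum (h := h) (hint_g.add hint_ind)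
      (fun x => (neg_le_of_abs_le (hC x)).trans (hgh x)) hstop
    rwa [integral_add hint_g hint_ind, integral_indicator_const _ (hgood N).compl,
      smul_eq_mul] at this
  exact ge_of_tendsto (by simpa using tendsto_const_nhds.add (hbad.mul_const K))
    ((eventually_ge_atTop 1).mono hbound)

theorem MeasureTheory.MeasurePreserving.le_integral_of_ae_le_limsup_birkhoffAverage
    [IsProbabilityMeasure μ] (hf : MeasurePreserving f μ μ) {g : α → ℝ} (hg : Measurable g)
    {C : ℝ} (hC : ∀ x, |g x| ≤ C) {c : ℝ}
    (hc : ∀ᵐ x ∂μ, c ≤ limsup (birkhoffAverage ℝ f g · x) atTop) :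
    c ≤ ∫ x, g x ∂μ := by
  refine le_of_forall_sub_le fun ε hε => hf.le_integral_of_ae_exists_le_birkhoffSum hg hC ?_
  filter_upwards [hc] with x hx
  have hfreq : ∃ᶠ n in atTop, c - ε < birkhoffAverage ℝ f g n x :=
    frequently_lt_of_lt_limsup (isBoundedUnder_ge_birkhoffAverage hC x).isCoboundedUnder_flip
      (by linarith)
  obtain ⟨n, hlt, hn⟩ := (hfreq.and_eventually (eventually_gt_atTop 0)).exists
  rw [birkhoffAverage, smul_eq_mul, lt_inv_mul_iff₀ (by exact_mod_cast hn)] at hlt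
  exact ⟨n, hn, hlt.le⟩

theorem Ergodic.exists_ae_limsup_birkhoffAverage_eq (hf : Ergodic f μ) {g : α → ℝ}
    (hg : Measurable g) {C : ℝ} (hC : ∀ x, |g x| ≤ C) :
    ∃ c, ∀ᵐ x ∂μ, limsup (birkhoffAverage ℝ f g · x) atTop = c := by
  have hmeas : Measurable fun x => limsup (birkhoffAverage ℝ f g · x) atTop :=
    Measurable.limsup fun n => (hf.measurable.birkhoffSum hg n).const_smul (n : ℝ)⁻¹
  exact hf.ae_eq_const_of_ae_eq_comp_ae hmeas.aestronglyMeasurable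
    (Eventually.of_forall fun x => limsup_birkhoffAverage_apply hC x)

theorem Ergodic.ae_limsup_birkhoffAverage_le_integral [IsProbabilityMeasure μ]
    (hf : Ergodic f μ) {g : α → ℝ} (hg : Measurable g) {C : ℝ} (hC : ∀ x, |g x| ≤ C) :
    ∀ᵐ x ∂μ, limsup (birkhoffAverage ℝ f g · x) atTop ≤ ∫ x, g x ∂μ := by
  obtain ⟨c, hc⟩ := hf.exists_ae_limsup_birkhoffAverage_eq hg hC
  have hle := hf.toMeasurePreserving.le_integral_of_ae_le_limsup_birkhoffAverage hg hC
    (hc.mono fun x hx => hx.ge)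
  filter_upwards [hc] with x hx
  rwa [hx]

theorem Ergodic.ae_tendsto_birkhoffAverage [IsProbabilityMeasure μ] (hf : Ergodic f μ)
    {g : α → ℝ} (hg : Measurable g) {C : ℝ} (hC : ∀ x, |g x| ≤ C) :
    ∀ᵐ x ∂μ, Tendsto (birkhoffAverage ℝ f g · x) atTop (𝓝 (∫ x, g x ∂μ)) := by
  filter_upwards [hf.ae_limsup_birkhoffAverage_le_integral hg hC,
    hf.ae_limsup_birkhoffAverage_le_integral hg.neg (g := -g) fun x => by simpa using hC x]
    with x hsup hinf
  have hneg := Antitone.map_liminf_of_continuousAt (fun _ _ h => neg_le_neg h)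
    (birkhoffAverage ℝ f g · x) continuous_neg.continuousAt
    (isBoundedUnder_le_birkhoffAverage hC x).isCoboundedUnder_flip
    (isBoundedUnder_ge_birkhoffAverage hC x)
  simp only [birkhoffAverage_neg, Pi.neg_apply, integral_neg] at hinf
  simp only [Function.comp_def] at hneg
  refine tendsto_of_le_liminf_of_limsup_le ?_ hsup (isBoundedUnder_le_birkhoffAverage hC x)
    (isBoundedUnder_ge_birkhoffAverage hC x)
  linarith

end MeasurePreserving

section DoubleLimit

variable {ι E : Type*} [PseudoMetricSpace E] {l : Filter ι} {u : ι → E} {L : ℕ → E}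

theorem cauchySeq_of_eventually_dist_le [l.NeBot]
    (h : ∀ δ > 0, ∀ᶠ k in atTop, ∀ᶠ n in l, dist (u n) (L k) ≤ δ) : CauchySeq L := by
  refine Metric.cauchySeq_iff'.2 fun ε hε => ?_
  obtain ⟨K, hK⟩ := eventually_atTop.1 (h (ε / 3) (by positivity))
  refine ⟨K, fun k hk => ?_⟩
  obtain ⟨n, hnk, hnK⟩ := ((hK k hk).and (hK K le_rfl)).exists
  calc dist (L k) (L K) ≤ dist (u n) (L k) + dist (u n) (L K) := dist_triangle_left _ _ _
    _ < ε := by linarith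

theorem tendsto_of_eventually_dist_le {v : ℕ → ι → E} {ℓ : E}
    (hv : ∀ k, Tendsto (v k) l (𝓝 (L k))) (hL : Tendsto L atTop (𝓝 ℓ))
    (h : ∀ δ > 0, ∀ᶠ k in atTop, ∀ᶠ n in l, dist (u n) (v k n) ≤ δ) :
    Tendsto u l (𝓝 ℓ) := by
  refine Metric.tendsto_nhds.2 fun ε hε => ?_
  obtain ⟨k, hk, hLk⟩ :=
    ((h (ε / 3) (by positivity)).and (Metric.tendsto_nhds.1 hL (ε / 3) (by positivity))).exists
  filter_upwards [hk, Metric.tendsto_nhds.1 (hv k) (ε / 3) (by positivity)] with n hn hvn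
  calc dist (u n) ℓ ≤ dist (u n) (v k n) + dist (v k n) (L k) + dist (L k) ℓ :=
        dist_triangle4 _ _ _ _
    _ < ε := by linarith

end DoubleLimit

theorem MeasureTheory.dist_integral_le_of_forall_dist_le {α E : Type*} [MeasurableSpace α]
    {μ : Measure α} [IsProbabilityMeasure μ] [NormedAddCommGroup E] [NormedSpace ℝ E]
    {F₁ F₂ : α → E} (h₁ : Integrable F₁ μ) (h₂ : Integrable F₂ μ) {δ : ℝ}
    (h : ∀ x, dist (F₁ x) (F₂ x) ≤ δ) :
    dist (∫ x, F₁ x ∂μ) (∫ x, F₂ x ∂μ) ≤ δ := by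
  rw [dist_eq_norm, ← integral_sub h₁ h₂]
  simpa using norm_integral_le_of_norm_le_const (μ := μ)
    (Eventually.of_forall fun x => (dist_eq_norm (F₁ x) (F₂ x)).symm.trans_le (h x))

theorem ofReal_abs_le_supNorm {X : Type*} (F : X → ℝ) (x : X) :
    ENNReal.ofReal |F x| ≤ supNorm F :=
  le_iSup (fun y => ENNReal.ofReal |F y|) x

theorem ApproxSeq.eventually_forall_dist_le {X : Type*} {φ : X → X} {G Gk : ℕ → X → ℝ}
    (h : ApproxSeq φ G Gk) {δ : ℝ} (hδ : 0 < δ) :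
    ∀ᶠ k in atTop, ∀ᶠ n : ℕ in atTop, ∀ x,
      dist ((n : ℝ)⁻¹ * G n x) (birkhoffAverage ℝ φ (Gk k) n x) ≤ δ := by
  filter_upwards [h.eventually (gt_mem_nhds (ENNReal.ofReal_pos.2 hδ))] with k hk
  filter_upwards [eventually_lt_of_limsup_lt hk, eventually_gt_atTop 0] with n hn hn0 x
  have hn0' : (0 : ℝ) < n := by exact_mod_cast hn0
  rw [ENNReal.div_lt_iff (by simp [hn0.ne']) (by simp), ← ENNReal.ofReal_natCast,
    ← ENNReal.ofReal_mul hδ.le] at hn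
  have hx := ((ofReal_abs_le_supNorm _ x).trans_lt hn)
  rw [ENNReal.ofReal_lt_ofReal_iff (by positivity)] at hx
  rw [Real.dist_eq, birkhoffAverage, smul_eq_mul, ← mul_sub, abs_mul, abs_inv, Nat.abs_cast,
    inv_mul_le_iff₀ hn0']
  exact hx.le.trans_eq (by ring)

theorem asympAdd_ergodic_theorem_general
    {M : Type*} [MetricSpace M] [CompactSpace M] [MeasurableSpace M] [BorelSpace M]
    (φ : M → M)
    (Q : Measure M) [IsProbabilityMeasure Q] (hQ : Ergodic φ Q)
    (G : ℕ → M → ℝ) (hG : AsympAdd φ G) :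
    ∃ GQ : ℝ,
      Tendsto (fun n : ℕ => (n : ℝ)⁻¹ * ∫ x, G n x ∂Q) atTop (nhds GQ) ∧
      ∀ᵐ x ∂Q, Tendsto (fun n : ℕ => (n : ℝ)⁻¹ * G n x) atTop (nhds GQ) := by
  obtain ⟨hGb, Gk, hGk, happrox⟩ := hG
  have hGk_bdd (k : ℕ) : ∃ C, ∀ x, |Gk k x| ≤ C :=
    (isCompact_univ.exists_bound_of_continuousOn (hGk k).continuousOn).imp
      fun C hC x => hC x (mem_univ x)
  choose C hC using hGk_bdd
  have hGk_int (k : ℕ) : Integrable (Gk k) Q :=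
    Integrable.of_bound (hGk k).aestronglyMeasurable (C k) (Eventually.of_forall (hC k))
  have hG_int (n : ℕ) : Integrable (G n) Q := by
    obtain ⟨hGm, D, hD⟩ := hGb n
    exact Integrable.of_bound hGm.aestronglyMeasurable D (Eventually.of_forall hD)
  have hmean (δ : ℝ) (hδ : 0 < δ) : ∀ᶠ k in atTop, ∀ᶠ n : ℕ in atTop,
      dist ((n : ℝ)⁻¹ * ∫ x, G n x ∂Q) (∫ x, Gk k x ∂Q) ≤ δ := by
    filter_upwards [happrox.eventually_forall_dist_le hδ] with k hk
    filter_upwards [hk, eventually_ne_atTop 0] with n hn hn0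
    rw [← integral_const_mul, ← hQ.toMeasurePreserving.integral_birkhoffAverage (hGk_int k) hn0]
    exact dist_integral_le_of_forall_dist_le ((hG_int n).const_mul _)
      (hQ.toMeasurePreserving.integrable_birkhoffAverage (hGk_int k) n) hn
  obtain ⟨GQ, hGQ⟩ := cauchySeq_tendsto_of_complete (cauchySeq_of_eventually_dist_le hmean)
  refine ⟨GQ, tendsto_of_eventually_dist_le (fun k => tendsto_const_nhds) hGQ hmean, ?_⟩
  filter_upwards [ae_all_iff.2 fun k => hQ.ae_tendsto_birkhoffAverage (hGk k).measurable (hC k)]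
    with x hx
  exact tendsto_of_eventually_dist_le hx hGQ fun δ hδ =>
    (happrox.eventually_forall_dist_le hδ).mono fun k hk => hk.mono fun n hn => hn x

/-- **Ergodic theorem for asymptotically additive sequences (Lemma 5.3).**
If `Q` is a `φ`-ergodic Borel probability measure and `G = {G_n}` is asymptotically
additive, then for `Q`-almost every `x`, `(1/n) G_n(x) → G(Q)`, where
`G(Q) = lim_n (1/n) ∫ G_n dQ`. -/
theorem asympAdd_ergodic_theorem
    {M : Type*} [MetricSpace M] [CompactSpace M] [MeasurableSpace M] [BorelSpace M]
    (φ : M → M) (hφ : Continuous φ)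
    (Q : Measure M) [IsProbabilityMeasure Q] (hQ : Ergodic φ Q)
    (G : ℕ → M → ℝ) (hG : AsympAdd φ G) :
    ∃ GQ : ℝ,
      Tendsto (fun n : ℕ => (n : ℝ)⁻¹ * ∫ x, G n x ∂Q) atTop (nhds GQ) ∧
      ∀ᵐ x ∂Q, Tendsto (fun n : ℕ => (n : ℝ)⁻¹ * G n x) atTop (nhds GQ) :=
  asympAdd_ergodic_theorem_general φ Q hQ G hG
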